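/- arXiv:2312.01683 — 12 statements merged into one kernel-verified Lean document; each statement's English description precedes it below -/
import Mathlib

section
/- For all nonnegative reals x1, x2, x3 with (x1,x2,x3) ≠ (0,0,0), (x1+x2+x3)^4 > 12·(x1^2·x2^2 + x1^2·x3^2 + x2^2·x3^2 + 2·x1^2·x2·x3). -/
theorem stmt_1 (x1 x2 x3 : ℝ) (h1 : 0 ≤ x1) (h2 : 0 ≤ x2) (h3 : 0 ≤ x3)
    (hne : (x1, x2, x3) ≠ (0, 0, 0)) :
    (x1 + x2 + x3)^4 > 12 * (x1^2 * x2^2 + x1^2 * x3^2 + x2^2 * x3^2 + 2 * x1^2 * x2 * x3) := by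
  have hs : 0 < x1 + x2 + x3 := by
    rcases lt_or_eq_of_le h1 with h | h
    · linarith
    rcases lt_or_eq_of_le h2 with h' | h'
    · linarith
    rcases lt_or_eq_of_le h3 with h'' | h''
    · linarith
    exact absurd (by simp [← h, ← h', ← h'']) hne
  nlinarith [sq_nonneg (x1 - x2), sq_nonneg (x1 - x3), sq_nonneg (x2 - x3),
    sq_nonneg (x1 + x2 - x3), sq_nonneg (x1 - x2 + x3), sq_nonneg (x2 + x3 - x1),
    mul_pos hs hs, sq_nonneg (x1*x2 - x1*x3), sq_nonneg (x1*x2 - x2*x3), sq_nonneg (x1*x3 - x2*x3),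
    mul_nonneg h1 h2, mul_nonneg h1 h3, mul_nonneg h2 h3,
    mul_nonneg (mul_nonneg h1 h2) h3, sq_nonneg (x1^2 - x2*x3)]
end

section
/- For all nonnegative reals x1, x2, x3, (x1+x2+x3)^4 ≥ 8·(x1^3·x3 + x1·x2^3 + x2^3·x3 + x2·x3^3 + x1^3·x2 + x1·x3^3), with equality if and only if two of x1, x2, x3 are equal and the third is 0. -/
theorem stmt_4 (x1 x2 x3 : ℝ) (h1 : 0 ≤ x1) (h2 : 0 ≤ x2) (h3 : 0 ≤ x3) :
    (x1 + x2 + x3)^4 ≥ 8 * (x1^3 * x3 + x1 * x2^3 + x2^3 * x3 + x2 * x3^3 + x1^3 * x2 + x1 * x3^3) ∧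
    ((x1 + x2 + x3)^4 = 8 * (x1^3 * x3 + x1 * x2^3 + x2^3 * x3 + x2 * x3^3 + x1^3 * x2 + x1 * x3^3) ↔
      (x1 = x2 ∧ x3 = 0) ∨ (x1 = x3 ∧ x2 = 0) ∨ (x2 = x3 ∧ x1 = 0)) := by
  have key : (x1 + x2 + x3)^4 - 8 * (x1^3 * x3 + x1 * x2^3 + x2^3 * x3 + x2 * x3^3 + x1^3 * x2 + x1 * x3^3)
      = (x1^2 + x2^2 + x3^2 - 2*x1*x2 - 2*x2*x3 - 2*x1*x3)^2 + 8 * (x1 * x2 * x3 * (x1 + x2 + x3)) := by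
    ring
  have hU : 0 ≤ x1 * x2 * x3 * (x1 + x2 + x3) := by positivity
  have hQ : 0 ≤ (x1^2 + x2^2 + x3^2 - 2*x1*x2 - 2*x2*x3 - 2*x1*x3)^2 := sq_nonneg _
  constructor
  · nlinarith [key, hU, hQ]
  constructor
  · intro h
    have hsum : (x1^2 + x2^2 + x3^2 - 2*x1*x2 - 2*x2*x3 - 2*x1*x3)^2
        + 8 * (x1 * x2 * x3 * (x1 + x2 + x3)) = 0 := by linarith [key]
    have hQ0 : (x1^2 + x2^2 + x3^2 - 2*x1*x2 - 2*x2*x3 - 2*x1*x3)^2 = 0 := by linarith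
    have hU0 : x1 * x2 * x3 * (x1 + x2 + x3) = 0 := by linarith
    have hQ0' : x1^2 + x2^2 + x3^2 - 2*x1*x2 - 2*x2*x3 - 2*x1*x3 = 0 := by
      have := sq_eq_zero_iff.mp hQ0; linarith [this]
    rcases mul_eq_zero.mp hU0 with hP | hS
    · rcases mul_eq_zero.mp hP with hP' | h3z
      · rcases mul_eq_zero.mp hP' with h1z | h2z
        · -- x1 = 0
          right; right
          constructor
          · subst h1z
            have : (x2 - x3)^2 = 0 := by nlinarith [hQ0']
            have := sq_eq_zero_iff.mp this; linarith
          · exact h1z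
        · -- x2 = 0
          right; left
          constructor
          · subst h2z
            have : (x1 - x3)^2 = 0 := by nlinarith [hQ0']
            have := sq_eq_zero_iff.mp this; linarith
          · exact h2z
      · -- x3 = 0
        left
        constructor
        · subst h3z
          have : (x1 - x2)^2 = 0 := by nlinarith [hQ0']
          have := sq_eq_zero_iff.mp this; linarith
        · exact h3z
    · -- sum = 0 → all zero
      have e1 : x1 = 0 := by linarith
      have e2 : x2 = 0 := by linarith
      have e3 : x3 = 0 := by linarith
      left; exact ⟨by rw [e1, e2], e3⟩
  · rintro (⟨he, hz⟩ | ⟨he, hz⟩ | ⟨he, hz⟩) <;> subst he <;> subst hz <;> ring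
end

section
/- For all nonnegative reals x1, x2, x3, (x1+x2+x3)^4 ≥ 8·(x1^3·x3 + x1·x2^3 + x2^3·x3 + x2·x3^3 + x1^3·x2 + x1·x3^3). -/
theorem aux_stmt_5 (a b c : ℝ) (hc : 0 ≤ c) (hcb : c ≤ b) (hba : b ≤ a) :
    (a + b + c)^4 ≥ 8 * (a^3 * c + a * b^3 + b^3 * c + b * c^3 + a^3 * b + a * c^3) := by
  nlinarith [sq_nonneg ((a-b)^2), sq_nonneg (a-b), sq_nonneg (b-c), sq_nonneg (a-c),
    mul_nonneg (sub_nonneg.2 hba) (sub_nonneg.2 hcb), mul_nonneg hc (sub_nonneg.2 hba),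
    mul_nonneg hc (sub_nonneg.2 hcb), mul_nonneg (mul_nonneg hc hc) hc,
    mul_nonneg (sub_nonneg.2 hba) (sub_nonneg.2 hba),
    sq_nonneg (a+b-3*c), sq_nonneg (a-b-c), sq_nonneg (a-b+c),
    mul_nonneg (mul_nonneg hc (sub_nonneg.2 hba)) (sub_nonneg.2 hcb),
    mul_nonneg (mul_nonneg hc hc) (sub_nonneg.2 hba),
    mul_nonneg (mul_nonneg hc hc) (sub_nonneg.2 hcb)]

theorem stmt_5 (x1 x2 x3 : ℝ) (h1 : 0 ≤ x1) (h2 : 0 ≤ x2) (h3 : 0 ≤ x3) :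
    (x1 + x2 + x3)^4 ≥ 8 * (x1^3 * x3 + x1 * x2^3 + x2^3 * x3 + x2 * x3^3 + x1^3 * x2 + x1 * x3^3) := by
  rcases le_total x1 x2 with h12 | h12 <;> rcases le_total x2 x3 with h23 | h23 <;>
    rcases le_total x1 x3 with h13 | h13
  · nlinarith [aux_stmt_5 x3 x2 x1 h1 h12 h23]
  · nlinarith [aux_stmt_5 x3 x2 x1 h1 h12 h23]
  · nlinarith [aux_stmt_5 x2 x3 x1 h1 h13 h23]
  · nlinarith [aux_stmt_5 x2 x1 x3 h3 h13 h12]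
  · nlinarith [aux_stmt_5 x3 x1 x2 h2 h12 h13]
  · nlinarith [aux_stmt_5 x1 x3 x2 h2 h23 h13]
  · nlinarith [aux_stmt_5 x1 x2 x3 h3 h23 h12]
  · nlinarith [aux_stmt_5 x1 x2 x3 h3 h23 h12]
end

section
/- For all nonnegative reals x1, x2, x3, (x1 + x2 - x3)^4 ≥ 8·x1^2·x2·(x1 - 3·x3). -/
theorem stmt_6 (x1 x2 x3 : ℝ) (h1 : 0 ≤ x1) (h2 : 0 ≤ x2) (h3 : 0 ≤ x3) :
    (x1 + x2 - x3)^4 ≥ 8 * x1^2 * x2 * (x1 - 3 * x3) := by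
  rcases le_or_gt x1 (3*x3) with h | h
  · have hn : x1 - 3*x3 ≤ 0 := by linarith
    nlinarith [sq_nonneg ((x1+x2-x3)^2), mul_nonneg (mul_nonneg (sq_nonneg x1) h2) (neg_nonneg.mpr hn)]
  · have ht : (0:ℝ) ≤ x1 - 3*x3 := by linarith
    set a := x1/3 with ha
    set c := (x1 - 3*x3)/3 with hc
    have hs : x1 + x2 - x3 = 2*a + x2 + c := by rw [ha, hc]; ring
    have h1 : (x1+x2-x3)^2 ≥ 8*a*(x2+c) := by nlinarith [sq_nonneg (2*a - (x2+c))]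
    have h2' : (x2+c)^2 ≥ 4*x2*c := by nlinarith [sq_nonneg (x2-c)]
    have hac : 0 ≤ a := by positivity
    have hxc : 0 ≤ x2 + c := by rw [hc]; linarith
    have h3' : (x1+x2-x3)^4 ≥ 64*a^2*(x2+c)^2 := by
      have := mul_le_mul h1 h1 (by positivity) (by positivity)
      nlinarith
    have h4 : 64*a^2*(x2+c)^2 ≥ 256*a^2*x2*c := by nlinarith [sq_nonneg a]
    have : 256*a^2*x2*c ≥ 8 * x1^2 * x2 * (x1 - 3*x3) := by
      rw [ha, hc]; nlinarith [mul_nonneg (mul_nonneg (sq_nonneg x1) h2) ht]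
    linarith
end

section
/- For all nonnegative reals x1, x2, x3, (x1 - x2 + x3)^4 ≥ 8·x1·x3^2·(x3 - 3·x2). -/
lemma amgm4 (a d : ℝ) (ha : 0 ≤ a) (hd : 0 ≤ d) : (a + d)^4 ≥ 8 * a * d^3 := by
  nlinarith [sq_nonneg (3*a - d), sq_nonneg (a - d), sq_nonneg (a + d), mul_nonneg ha hd, mul_nonneg (mul_nonneg ha hd) hd, sq_nonneg d, sq_nonneg a, mul_nonneg (mul_nonneg ha ha) hd]

theorem stmt_7 (x1 x2 x3 : ℝ) (h1 : 0 ≤ x1) (h2 : 0 ≤ x2) (h3 : 0 ≤ x3) :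
    (x1 - x2 + x3)^4 ≥ 8 * x1 * x3^2 * (x3 - 3 * x2) := by
  rcases le_or_gt x3 (3*x2) with h | h
  · have hr : 8 * x1 * x3^2 * (x3 - 3*x2) ≤ 0 :=
      mul_nonpos_of_nonneg_of_nonpos (by positivity) (by linarith)
    nlinarith [sq_nonneg ((x1 - x2 + x3)^2)]
  · have hd : 0 ≤ x3 - x2 := by linarith
    have key : x3^2 * (x3 - 3*x2) ≤ (x3 - x2)^3 := by nlinarith [mul_nonneg h2 h2, mul_nonneg h2 h3]
    have h4 : (x1 + (x3 - x2))^4 ≥ 8 * x1 * (x3 - x2)^3 := amgm4 x1 (x3-x2) h1 hd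
    have h5 : 8 * x1 * x3^2 * (x3 - 3*x2) ≤ 8 * x1 * (x3 - x2)^3 := by nlinarith [key, h1]
    calc (x1 - x2 + x3)^4 = (x1 + (x3 - x2))^4 := by ring
      _ ≥ 8 * x1 * (x3 - x2)^3 := h4
      _ ≥ 8 * x1 * x3^2 * (x3 - 3*x2) := h5
end

section
/- For all nonnegative reals x1, x2, x3, (x2 + x3 - x1)^4 ≥ 8·x2^2·x3·(x2 - 3·x1). -/
theorem stmt_8 (x1 x2 x3 : ℝ) (h1 : 0 ≤ x1) (h2 : 0 ≤ x2) (h3 : 0 ≤ x3) :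
    (x2 + x3 - x1)^4 ≥ 8 * x2^2 * x3 * (x2 - 3 * x1) := by
  rcases le_or_gt x2 (3 * x1) with h | h
  · have : 8 * x2^2 * x3 * (x2 - 3 * x1) ≤ 0 := by
      apply mul_nonpos_of_nonneg_of_nonpos
      · positivity
      · linarith
    nlinarith [sq_nonneg ((x2 + x3 - x1)^2)]
  · have key : ((x2 - x1) + x3)^4 = 8 * (x2-x1)^3 * x3 + (x3^2 + 2*(x2-x1)*x3 - (x2-x1)^2)^2 + 4*(x2-x1)^2*x3^2 := by ring
    nlinarith [sq_nonneg (x3^2 + 2*(x2-x1)*x3 - (x2-x1)^2), sq_nonneg ((x2-x1)*x3), mul_nonneg (mul_nonneg (mul_nonneg h1 h1) h3) (by linarith : (0:ℝ) ≤ 3*x2 - x1)]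
end

section
/- For all nonnegative reals x1, x2, x3, (x1 + x2 - x3)^4 ≥ 8·(x1·x2^3 - x2^3·x3), with equality if and only if x2 = 0 and x1 = x3. -/
theorem stmt_9 (x1 x2 x3 : ℝ) (h1 : 0 ≤ x1) (h2 : 0 ≤ x2) (h3 : 0 ≤ x3) :
    (x1 + x2 - x3)^4 ≥ 8 * (x1 * x2^3 - x2^3 * x3) ∧
    ((x1 + x2 - x3)^4 = 8 * (x1 * x2^3 - x2^3 * x3) ↔ x2 = 0 ∧ x1 = x3) := by
  have key : (x1 + x2 - x3)^4 - 8 * (x1 * x2^3 - x2^3 * x3)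
      = ((x1-x3)^2 + 2*(x1-x3)*x2 - x2^2)^2 + 4*((x1-x3)*x2)^2 := by ring
  constructor
  · nlinarith [sq_nonneg ((x1-x3)^2 + 2*(x1-x3)*x2 - x2^2), sq_nonneg ((x1-x3)*x2)]
  constructor
  · intro heq
    have h0 : ((x1-x3)^2 + 2*(x1-x3)*x2 - x2^2)^2 + 4*((x1-x3)*x2)^2 = 0 := by
      rw [← key]; linarith
    have hA : (x1-x3)*x2 = 0 := by
      have : ((x1-x3)*x2)^2 = 0 := by
        nlinarith [sq_nonneg ((x1-x3)^2 + 2*(x1-x3)*x2 - x2^2), sq_nonneg ((x1-x3)*x2)]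
      exact pow_eq_zero_iff (by norm_num) |>.mp this
    rcases mul_eq_zero.mp hA with h | h
    · -- x1 - x3 = 0, then h0 gives x2^4 = 0... check: A = -x2^2, h0: x2^4 = 0
      have hx2 : x2 = 0 := by
        have : x2^4 = 0 := by nlinarith [h0, h]
        exact pow_eq_zero_iff (by norm_num) |>.mp this
      exact ⟨hx2, by linarith⟩
    · -- x2 = 0, then h0 gives (x1-x3)^4 = 0
      have : (x1-x3)^4 = 0 := by nlinarith [h0, h]
      have := pow_eq_zero_iff (n := 4) (by norm_num) |>.mp this
      exact ⟨h, by linarith⟩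
  · rintro ⟨rfl, rfl⟩
    ring
end

section
/- For all nonnegative reals x1, x2, x3, (x1 + x3 - x2)^4 ≥ 8·(x1·x3^3 - x2·x3^3), with equality if and only if x3 = 0 and x1 = x2. -/
lemma aux11 (u v : ℝ) (hv : 0 < v) : u^4 - 8*u*v^3 + 8*v^4 > 0 := by
  rcases le_or_gt u 0 with h | h
  · nlinarith [sq_nonneg (u^2), pow_pos hv 4, mul_nonneg (neg_nonneg.2 h) (pow_pos hv 3).le]
  · nlinarith [sq_nonneg (10*u^2 - 13*u*v), sq_nonneg (10*u*v - 13*v^2), sq_nonneg (10*u^2 - 13*v^2), mul_pos h hv, mul_pos (mul_pos h hv) hv, sq_nonneg (u-v), mul_pos (mul_pos h h) hv]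

theorem stmt_11 (x1 x2 x3 : ℝ) (h1 : 0 ≤ x1) (h2 : 0 ≤ x2) (h3 : 0 ≤ x3) :
    (x1 + x3 - x2)^4 ≥ 8 * (x1 * x3^3 - x2 * x3^3) ∧
    ((x1 + x3 - x2)^4 = 8 * (x1 * x3^3 - x2 * x3^3) ↔ x3 = 0 ∧ x1 = x2) := by
  have key : 0 < x3 → (x1 + x3 - x2)^4 > 8 * (x1 * x3^3 - x2 * x3^3) := by
    intro h
    have := aux11 (x1 - x2 + x3) x3 h
    nlinarith [this]
  constructor
  · rcases eq_or_lt_of_le h3 with h | h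
    · rw [← h]; nlinarith [sq_nonneg ((x1 - x2)^2)]
    · exact le_of_lt (key h)
  · constructor
    · intro heq
      rcases eq_or_lt_of_le h3 with h | h
      · refine ⟨h.symm, ?_⟩
        rw [← h] at heq
        have h4 : (x1 - x2)^4 = 0 := by nlinarith [heq]
        have h5 : x1 - x2 = 0 := pow_eq_zero_iff (n := 4) (by norm_num) |>.mp h4
        linarith
      · exact absurd heq (ne_of_gt (key h))
    · rintro ⟨hx3, hx⟩
      subst hx3; subst hx; ring
end

section
/- For all nonnegative reals x1, x2, x3 with (x1,x2,x3) ≠ (0,0,0), the quartic form x1^4 + x2^4 + x3^4 + 6x1^2x2^2 + 6x1^2x3^2 - 6x2^2x3^2 + 4(x1^3x2 + x1^3x3 + x1x2^3 + x1x3^3 + x2^3x3 + x2x3^3) - 12x1^2x2x3 - 12x1x2^2x3 + 12x1x2x3^2 is strictly positive. -/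
theorem stmt_14 (x1 x2 x3 : ℝ) (h1 : 0 ≤ x1) (h2 : 0 ≤ x2) (h3 : 0 ≤ x3)
    (hne : (x1, x2, x3) ≠ (0, 0, 0)) :
    x1^4 + x2^4 + x3^4 + 6 * x1^2 * x2^2 + 6 * x1^2 * x3^2 - 6 * x2^2 * x3^2 +
      4 * (x1^3 * x2 + x1^3 * x3 + x1 * x2^3 + x1 * x3^3 + x2^3 * x3 + x2 * x3^3) -
      12 * x1^2 * x2 * x3 - 12 * x1 * x2^2 * x3 + 12 * x1 * x2 * x3^2 > 0 := by
  have hs : 0 < x1 + x2 + x3 := by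
    rcases lt_or_eq_of_le h1 with h | h
    · linarith
    rcases lt_or_eq_of_le h2 with h' | h'
    · linarith
    rcases lt_or_eq_of_le h3 with h'' | h''
    · linarith
    exact absurd (by simp [← h, ← h', ← h'']) hne
  nlinarith [mul_pos hs hs, sq_nonneg (x1 + x2 - x3), sq_nonneg (x1 - x2 + x3),
    sq_nonneg (2*x1 - x2 + x3), sq_nonneg (x1 + 2*x3 - x2), sq_nonneg (x1*x2 - x2*x3),
    sq_nonneg (x1*x3 - x2*x3), sq_nonneg (x1*x2 + x1*x3 - x2*x3),
    sq_nonneg (x1^2 + x1*x2 + x1*x3 - x2*x3),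
    mul_nonneg (mul_nonneg h1 h2) h3, mul_nonneg h2 h3,
    mul_nonneg (mul_nonneg h1 h1) (mul_nonneg h2 h3),
    mul_nonneg (mul_nonneg h2 h3) (sq_nonneg (x2 - x3)),
    mul_nonneg h1 (sq_nonneg (x2 - x3)), mul_nonneg h2 (sq_nonneg (x1 - x3)),
    mul_nonneg h3 (sq_nonneg (x1 - x2)),
    mul_nonneg (mul_nonneg h1 h2) (sq_nonneg (x2 - x3)),
    mul_nonneg (mul_nonneg h1 h3) (sq_nonneg (x2 - x3))]
end

section
/- Let a, b, c be reals with |a| = |b| = |c| = 1. The polynomial f(x1,x2) = x1^4 + 4a·x1^3·x2 + 6b·x1^2·x2^2 + 4c·x1·x2^3 + x2^4 is nonnegative for all nonnegative x1, x2 if and only if b = 1 or (a = 1 and c = 1). -/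
theorem stmt_15 (a b c : ℝ) (ha : |a| = 1) (hb : |b| = 1) (hc : |c| = 1) :
    (∀ x1 x2 : ℝ, 0 ≤ x1 → 0 ≤ x2 →
      x1^4 + 4 * a * x1^3 * x2 + 6 * b * x1^2 * x2^2 + 4 * c * x1 * x2^3 + x2^4 ≥ 0) ↔
    (b = 1 ∨ (a = 1 ∧ c = 1)) := by
  rw [abs_eq (by norm_num : (0:ℝ) ≤ 1)] at ha hb hc
  constructor
  · intro h
    rcases hb with hb | hb
    · exact Or.inl hb
    · right
      subst hb
      have h11 := h 1 1 (by norm_num) (by norm_num)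
      constructor
      · rcases ha with ha | ha
        · exact ha
        · exfalso; rcases hc with hc | hc <;> subst ha <;> subst hc <;> linarith
      · rcases hc with hc | hc
        · exact hc
        · exfalso; rcases ha with ha' | ha' <;> subst hc <;> subst ha' <;> linarith
  · rintro (hb | ⟨ha1, hc1⟩) <;> intro x y hx hy
    · subst hb
      rcases ha with ha | ha <;> rcases hc with hc | hc <;> subst ha <;> subst hc <;>
        nlinarith [sq_nonneg (x - y), sq_nonneg (x + y), sq_nonneg ((x - y)^2),
          mul_nonneg hx hy, mul_nonneg (mul_nonneg hx hx) (mul_nonneg hx hy),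
          mul_nonneg (mul_nonneg hx hy) (mul_nonneg hy hy)]
    · subst ha1; subst hc1
      rcases hb with hb | hb <;> subst hb <;>
        nlinarith [sq_nonneg ((x - y)^2), sq_nonneg (x + y),
          mul_nonneg (mul_nonneg hx hy) (sq_nonneg (x - y)),
          mul_nonneg (mul_nonneg hx hy) (mul_nonneg hx hy)]
end

section
/- Let A be a 4th order 2-dimensional symmetric tensor with entries a_{1111} > 0, a_{2222} > 0, a_{1112} ≥ -a_{1111}^{3/4}·a_{2222}^{1/4}, a_{1122} ≥ (a_{1111}·a_{2222})^{1/2}, a_{1222} ≥ -a_{1111}^{1/4}·a_{2222}^{3/4}. Then for all nonnegative reals x1, x2: a_{1111}·x1^4 + 4·a_{1112}·x1^3·x2 + 6·a_{1122}·x1^2·x2^2 + 4·a_{1222}·x1·x2^3 + a_{2222}·x2^4 ≥ 0. -/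
theorem stmt_18 (a1111 a1112 a1122 a1222 a2222 : ℝ)
    (h0 : 0 < a1111) (h4 : 0 < a2222)
    (h1 : a1112 ≥ -(a1111 ^ ((3:ℝ)/4) * a2222 ^ ((1:ℝ)/4)))
    (h2 : a1122 ≥ (a1111 * a2222) ^ ((1:ℝ)/2))
    (h3 : a1222 ≥ -(a1111 ^ ((1:ℝ)/4) * a2222 ^ ((3:ℝ)/4)))
    (x1 x2 : ℝ) (hx1 : 0 ≤ x1) (hx2 : 0 ≤ x2) :
    a1111 * x1^4 + 4 * a1112 * x1^3 * x2 + 6 * a1122 * x1^2 * x2^2 +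
      4 * a1222 * x1 * x2^3 + a2222 * x2^4 ≥ 0 := by
  set p := a1111 ^ ((1:ℝ)/4) with hp
  set q := a2222 ^ ((1:ℝ)/4) with hq
  have hp0 : 0 < p := Real.rpow_pos_of_pos h0 _
  have hq0 : 0 < q := Real.rpow_pos_of_pos h4 _
  have e1 : a1111 = p ^ 4 := by
    rw [hp, ← Real.rpow_natCast (a1111 ^ ((1:ℝ)/4)) 4, ← Real.rpow_mul h0.le]
    norm_num
  have e2 : a2222 = q ^ 4 := by
    rw [hq, ← Real.rpow_natCast (a2222 ^ ((1:ℝ)/4)) 4, ← Real.rpow_mul h4.le]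
    norm_num
  have e3 : a1111 ^ ((3:ℝ)/4) = p ^ 3 := by
    rw [hp, ← Real.rpow_natCast (a1111 ^ ((1:ℝ)/4)) 3, ← Real.rpow_mul h0.le]
    norm_num
  have e4 : a2222 ^ ((3:ℝ)/4) = q ^ 3 := by
    rw [hq, ← Real.rpow_natCast (a2222 ^ ((1:ℝ)/4)) 3, ← Real.rpow_mul h4.le]
    norm_num
  have e5 : (a1111 * a2222) ^ ((1:ℝ)/2) = p ^ 2 * q ^ 2 := by
    rw [Real.mul_rpow h0.le h4.le, hp, hq,
      ← Real.rpow_natCast (a1111 ^ ((1:ℝ)/4)) 2, ← Real.rpow_mul h0.le,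
      ← Real.rpow_natCast (a2222 ^ ((1:ℝ)/4)) 2, ← Real.rpow_mul h4.le]
    norm_num
  rw [e3] at h1
  rw [e5] at h2
  rw [e4] at h3
  rw [e1, e2]
  nlinarith [pow_nonneg (sub_nonneg.2 (le_of_eq rfl : p*x1 - q*x2 ≤ p*x1 - q*x2)) 4,
    sq_nonneg (p*x1 - q*x2), sq_nonneg (p*x1 + q*x2),
    mul_nonneg (mul_nonneg hx1 hx2) (sq_nonneg (p*x1 - q*x2)),
    mul_nonneg hx1 hx2, sq_nonneg x1, sq_nonneg x2,
    mul_nonneg (mul_nonneg (pow_nonneg hx1 3) hx2) (sub_nonneg.2 h1),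
    mul_nonneg (mul_nonneg (sq_nonneg x1) (sq_nonneg x2)) (sub_nonneg.2 h2),
    mul_nonneg (mul_nonneg hx1 (pow_nonneg hx2 3)) (sub_nonneg.2 h3),
    sq_nonneg ((p*x1 - q*x2)^2)]
end

section
/- Let A be a 4th order 2-dimensional symmetric tensor with entries a_{1111} > 0, a_{2222} > 0, a_{1112} ≥ a_{1111}^{3/4}·a_{2222}^{1/4}, a_{1122} ≥ -(a_{1111}·a_{2222})^{1/2}, a_{1222} ≥ a_{1111}^{1/4}·a_{2222}^{3/4}. Then for all nonnegative reals x1, x2 not both zero: a_{1111}·x1^4 + 4·a_{1112}·x1^3·x2 + 6·a_{1122}·x1^2·x2^2 + 4·a_{1222}·x1·x2^3 + a_{2222}·x2^4 > 0. -/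
theorem stmt_19 (a1111 a1112 a1122 a1222 a2222 : ℝ)
    (h0 : 0 < a1111) (h4 : 0 < a2222)
    (h1 : a1112 ≥ a1111 ^ ((3:ℝ)/4) * a2222 ^ ((1:ℝ)/4))
    (h2 : a1122 ≥ -((a1111 * a2222) ^ ((1:ℝ)/2)))
    (h3 : a1222 ≥ a1111 ^ ((1:ℝ)/4) * a2222 ^ ((3:ℝ)/4))
    (x1 x2 : ℝ) (hx1 : 0 ≤ x1) (hx2 : 0 ≤ x2) (hne : (x1, x2) ≠ (0, 0)) :
    a1111 * x1^4 + 4 * a1112 * x1^3 * x2 + 6 * a1122 * x1^2 * x2^2 +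
      4 * a1222 * x1 * x2^3 + a2222 * x2^4 > 0 := by
  set u : ℝ := a1111 ^ ((1:ℝ)/4) with hu_def
  set v : ℝ := a2222 ^ ((1:ℝ)/4) with hv_def
  have hu : 0 < u := Real.rpow_pos_of_pos h0 _
  have hv : 0 < v := Real.rpow_pos_of_pos h4 _
  have hu4 : u ^ 4 = a1111 := by
    rw [hu_def, ← Real.rpow_natCast (a1111 ^ ((1:ℝ)/4)) 4, ← Real.rpow_mul h0.le]
    norm_num
  have hv4 : v ^ 4 = a2222 := by
    rw [hv_def, ← Real.rpow_natCast (a2222 ^ ((1:ℝ)/4)) 4, ← Real.rpow_mul h4.le]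
    norm_num
  have hu3 : u ^ 3 = a1111 ^ ((3:ℝ)/4) := by
    rw [hu_def, ← Real.rpow_natCast (a1111 ^ ((1:ℝ)/4)) 3, ← Real.rpow_mul h0.le]
    norm_num
  have hv3 : v ^ 3 = a2222 ^ ((3:ℝ)/4) := by
    rw [hv_def, ← Real.rpow_natCast (a2222 ^ ((1:ℝ)/4)) 3, ← Real.rpow_mul h4.le]
    norm_num
  have hu2 : u ^ 2 = a1111 ^ ((1:ℝ)/2) := by
    rw [hu_def, ← Real.rpow_natCast (a1111 ^ ((1:ℝ)/4)) 2, ← Real.rpow_mul h0.le]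
    norm_num
  have hv2 : v ^ 2 = a2222 ^ ((1:ℝ)/2) := by
    rw [hv_def, ← Real.rpow_natCast (a2222 ^ ((1:ℝ)/4)) 2, ← Real.rpow_mul h4.le]
    norm_num
  have hq : u ^ 2 * v ^ 2 = (a1111 * a2222) ^ ((1:ℝ)/2) := by
    rw [hu2, hv2, Real.mul_rpow h0.le h4.le]
  have h1' : a1112 ≥ u ^ 3 * v := by rw [hu3, hv_def]; exact h1
  have h2' : a1122 ≥ -(u ^ 2 * v ^ 2) := by rw [hq]; exact h2
  have h3' : a1222 ≥ u * v ^ 3 := by rw [hv3, hu_def]; exact h3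
  clear_value u v
  -- strict positivity of the lower-bound form
  have hcase : 0 < x1 ∨ 0 < x2 := by
    rcases eq_or_lt_of_le hx1 with h | h
    · rcases eq_or_lt_of_le hx2 with h' | h'
      · exact absurd (by rw [← h, ← h']) hne
      · exact Or.inr h'
    · exact Or.inl h
  have key : ∀ U V : ℝ, 0 ≤ U → 0 ≤ V → (0 < U ∨ 0 < V) →
      U ^ 4 + 4 * U ^ 3 * V - 6 * U ^ 2 * V ^ 2 + 4 * U * V ^ 3 + V ^ 4 > 0 := by
    intro U V hU hV hUV
    have hid : U ^ 4 + 4 * U ^ 3 * V - 6 * U ^ 2 * V ^ 2 + 4 * U * V ^ 3 + V ^ 4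
        = (U ^ 2 - V ^ 2) ^ 2 + 4 * (U * V) * (U - V) ^ 2 + 4 * U ^ 2 * V ^ 2 := by
      ring
    rw [hid]
    have h1 : 0 ≤ (U ^ 2 - V ^ 2) ^ 2 := sq_nonneg _
    have h2 : 0 ≤ 4 * (U * V) * (U - V) ^ 2 := by positivity
    rcases eq_or_lt_of_le hU with hU0 | hU0
    · subst hU0
      have hV0 : 0 < V := by
        rcases hUV with h | h
        · exact absurd rfl h.ne
        · exact h
      have : 0 < (V ^ 2) ^ 2 := by positivity
      nlinarith [this]
    · rcases eq_or_lt_of_le hV with hV0 | hV0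
      · subst hV0
        have : 0 < (U ^ 2) ^ 2 := by positivity
        nlinarith [this]
      · have h3 : 0 < 4 * U ^ 2 * V ^ 2 := by positivity
        linarith
  have hf : u ^ 4 * x1 ^ 4 + 4 * (u ^ 3 * v) * x1 ^ 3 * x2
      - 6 * (u ^ 2 * v ^ 2) * x1 ^ 2 * x2 ^ 2 + 4 * (u * v ^ 3) * x1 * x2 ^ 3
      + v ^ 4 * x2 ^ 4 > 0 := by
    have hk := key (u * x1) (v * x2) (by positivity) (by positivity)
      (by rcases hcase with h | h
          · exact Or.inl (mul_pos hu h)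
          · exact Or.inr (mul_pos hv h))
    have hexp : u ^ 4 * x1 ^ 4 + 4 * (u ^ 3 * v) * x1 ^ 3 * x2
        - 6 * (u ^ 2 * v ^ 2) * x1 ^ 2 * x2 ^ 2 + 4 * (u * v ^ 3) * x1 * x2 ^ 3
        + v ^ 4 * x2 ^ 4
        = (u * x1) ^ 4 + 4 * (u * x1) ^ 3 * (v * x2) - 6 * (u * x1) ^ 2 * (v * x2) ^ 2
          + 4 * (u * x1) * (v * x2) ^ 3 + (v * x2) ^ 4 := by ring
    rw [hexp]
    exact hk
  -- compare the original expression with the lower bound, term by term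
  have t1 : a1112 * (x1 ^ 3 * x2) ≥ (u ^ 3 * v) * (x1 ^ 3 * x2) :=
    mul_le_mul_of_nonneg_right h1' (by positivity)
  have t2 : a1122 * (x1 ^ 2 * x2 ^ 2) ≥ -(u ^ 2 * v ^ 2) * (x1 ^ 2 * x2 ^ 2) :=
    mul_le_mul_of_nonneg_right h2' (by positivity)
  have t3 : a1222 * (x1 * x2 ^ 3) ≥ (u * v ^ 3) * (x1 * x2 ^ 3) :=
    mul_le_mul_of_nonneg_right h3' (by positivity)
  rw [← hu4, ← hv4]
  linarith [hf, t1, t2, t3]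
end
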